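/- Let N be a norm on ℝ². Then for every integer k ≥ 1 there exists an injective map p : Fin (2^k) → EuclideanSpace ℝ (Fin 2) such that the number of unordered pairs {x, y} of distinct indices with N (p x − p y) = 1 is at least k·2^{k−1}. (Consequently, for every norm on ℝ² one can find n points with at least (1/2 − o(1))·n·log₂ n unit distances.) -/

import Mathlib

/-!
Choose unit vectors `v₀, …, v_{k-1}` for `N` one at a time, each avoiding the finitely many
differences of subset sums of the previous ones; this is possible because the unit sphere of a
norm on `ℝ²` is infinite. Then the `2^k` subset sums are pairwise distinct, and two subsets that
differ in exactly one index `i` give points at distance `N (± vᵢ) = 1`. These are `k · 2^k`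
ordered pairs, i.e. `k · 2^(k-1)` unordered ones.
-/

open Finset

def IsNorm {d : ℕ} (N : EuclideanSpace ℝ (Fin d) → ℝ) : Prop :=
  (∀ x, N x = 0 ↔ x = 0) ∧ (∀ (a : ℝ) (x), N (a • x) = |a| * N x) ∧
    ∀ x y, N (x + y) ≤ N x + N y

namespace IsNorm

variable {d : ℕ} {N : EuclideanSpace ℝ (Fin d) → ℝ}

theorem map_neg (hN : IsNorm N) (x : EuclideanSpace ℝ (Fin d)) : N (-x) = N x := by
  simpa using hN.2.1 (-1) x

theorem nonneg (hN : IsNorm N) (x : EuclideanSpace ℝ (Fin d)) : 0 ≤ N x := by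
  have h := hN.2.2 x (-x)
  rw [add_neg_cancel, (hN.1 0).2 rfl, hN.map_neg] at h
  linarith

theorem pos (hN : IsNorm N) {x : EuclideanSpace ℝ (Fin d)} (hx : x ≠ 0) : 0 < N x :=
  (hN.nonneg x).lt_of_ne fun h => hx ((hN.1 x).1 h.symm)

theorem map_inv_smul_self (hN : IsNorm N) {x : EuclideanSpace ℝ (Fin d)} (hx : x ≠ 0) :
    N ((N x)⁻¹ • x) = 1 := by
  rw [hN.2.1, abs_of_pos (inv_pos.2 (hN.pos hx)), inv_mul_cancel₀ (hN.pos hx).ne']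

theorem infinite_setOf_eq_one (hN : IsNorm N) (hd : 2 ≤ d) : {x | N x = 1}.Infinite := by
  let i₀ : Fin d := ⟨0, by omega⟩
  let i₁ : Fin d := ⟨1, hd⟩
  let u : ℝ → EuclideanSpace ℝ (Fin d) := fun t =>
    EuclideanSpace.single i₀ 1 + EuclideanSpace.single i₁ t
  have hu₀ : ∀ t, u t i₀ = 1 := fun t => by simp [u, i₀, i₁]
  have hu₁ : ∀ t, u t i₁ = t := fun t => by simp [u, i₀, i₁]
  have hu : ∀ t, u t ≠ 0 := fun t h => by simpa [h] using hu₀ t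
  -- the slope of the ray through `u t` recovers `t`
  have hslope : Function.LeftInverse (fun x : EuclideanSpace ℝ (Fin d) => x i₁ / x i₀)
      fun t => (N (u t))⁻¹ • u t := fun t => by
    simp only [PiLp.smul_apply, smul_eq_mul, hu₀, hu₁]
    field_simp [(hN.pos (hu t)).ne']
  exact Set.infinite_of_injective_forall_mem hslope.injective fun t => hN.map_inv_smul_self (hu t)

end IsNorm

theorem ncard_ne_eq_two_mul_ncard_lt {α : Type*} [LinearOrder α] [Finite α] {r : α → α → Prop}
    (hr : ∀ a b, r a b → r b a) :
    {q : α × α | q.1 ≠ q.2 ∧ r q.1 q.2}.ncard = 2 * {q : α × α | q.1 < q.2 ∧ r q.1 q.2}.ncard := by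
  set A := {q : α × α | q.1 < q.2 ∧ r q.1 q.2}
  have hsplit : {q : α × α | q.1 ≠ q.2 ∧ r q.1 q.2} = A ∪ Prod.swap ⁻¹' A := by
    ext ⟨a, b⟩
    simp only [A, Set.mem_ofPred_eq, Set.mem_union, Set.mem_preimage, Prod.fst_swap,
      Prod.snd_swap, ne_iff_lt_or_gt]
    constructor
    · rintro ⟨hab | hab, h⟩
      · exact .inl ⟨hab, h⟩
      · exact .inr ⟨hab, hr _ _ h⟩
    · rintro (⟨hab, h⟩ | ⟨hab, h⟩)
      · exact ⟨.inl hab, h⟩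
      · exact ⟨.inr hab, hr _ _ h⟩
  have hdisj : Disjoint A (Prod.swap ⁻¹' A) :=
    Set.disjoint_left.2 fun _ h h' => h.1.asymm h'.1
  rw [hsplit, Set.ncard_union_eq hdisj, two_mul,
    Set.ncard_preimage_of_injective_subset_range Prod.swap_injective
      (Prod.swap_surjective.range_eq ▸ Set.subset_univ _)]

section CubePoint

variable {G : Type*} [AddCommGroup G] {k : ℕ}

def cubePoint (v : Fin k → G) (f : Fin k → Bool) : G :=
  ∑ i, if f i then v i else 0

theorem cubePoint_cons (w : G) (v : Fin k → G) (f : Fin (k + 1) → Bool) :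
    cubePoint (Fin.cons w v) f = (if f 0 then w else 0) + cubePoint v (Fin.tail f) :=
  Fin.sum_univ_succ _

theorem cubePoint_update (v : Fin k → G) (f : Fin k → Bool) (i : Fin k) (b : Bool) :
    cubePoint v (Function.update f i b) =
      cubePoint v f - (if f i then v i else 0) + (if b then v i else 0) := by
  have hsplit : ∀ g : Fin k → Bool, cubePoint v g =
      (if g i then v i else 0) + ∑ j ∈ univ.erase i, if g j then v j else 0 := fun g =>
    (add_sum_erase _ _ (mem_univ i)).symm
  rw [hsplit, hsplit f,
    sum_congr rfl fun j hj => by rw [Function.update_of_ne (ne_of_mem_erase hj)]]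
  simp only [Function.update_self]
  abel

theorem cubePoint_sub_cubePoint_flip (v : Fin k → G) (f : Fin k → Bool) (i : Fin k) :
    cubePoint v f - cubePoint v (Function.update f i (!f i)) = if f i then v i else -v i := by
  rw [cubePoint_update]
  cases f i <;> simp

theorem exists_injective_cubePoint (U : Set G) (hU : U.Infinite) :
    ∀ k, ∃ v : Fin k → G, (∀ i, v i ∈ U) ∧ Function.Injective (cubePoint v)
  | 0 => ⟨Fin.elim0, fun i => i.elim0, fun f g _ => Subsingleton.elim f g⟩
  | k + 1 => by
    obtain ⟨v, hvU, hv⟩ := exists_injective_cubePoint U hU k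
    obtain ⟨w, hwU, hw⟩ := (hU.sdiff (Set.finite_range
      fun fg : (Fin k → Bool) × (Fin k → Bool) => cubePoint v fg.1 - cubePoint v fg.2)).nonempty
    refine ⟨Fin.cons w v, Fin.cases hwU hvU, fun f g hfg => ?_⟩
    rw [cubePoint_cons, cubePoint_cons] at hfg
    have h0 : f 0 = g 0 := by
      cases hf : f 0 <;> cases hg : g 0 <;>
        simp only [hf, hg, Bool.false_eq_true, ↓reduceIte, zero_add] at hfg
      · rfl
      · exact absurd ⟨(Fin.tail f, Fin.tail g), by simp [hfg]⟩ hw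
      · exact absurd ⟨(Fin.tail g, Fin.tail f), by simp [← hfg]⟩ hw
      · rfl
    rw [h0, add_right_inj] at hfg
    rw [← Fin.cons_self_tail f, ← Fin.cons_self_tail g, h0, hv hfg]

theorem mul_two_pow_le_ncard_unit_pairs_cubePoint {α : Type*} (e : α ≃ (Fin k → Bool))
    (N : G → ℝ) (hneg : ∀ x, N (-x) = N x) (v : Fin k → G) (hv : ∀ i, N (v i) = 1) :
    k * 2 ^ k ≤
      {q : α × α | q.1 ≠ q.2 ∧ N (cubePoint v (e q.1) - cubePoint v (e q.2)) = 1}.ncard := by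
  have : Finite α := .of_equiv _ e.symm
  let edge : (Fin k → Bool) × Fin k → α × α := fun fi =>
    (e.symm fi.1, e.symm (Function.update fi.1 fi.2 (!fi.1 fi.2)))
  calc k * 2 ^ k = (Set.univ : Set ((Fin k → Bool) × Fin k)).ncard := by
        simp [Set.ncard_univ, mul_comm]
    _ ≤ _ := by
      refine Set.ncard_le_ncard_of_injOn edge (fun ⟨f, i⟩ _ => ⟨by simp [edge], ?_⟩) ?_
      · simp only [edge, Equiv.apply_symm_apply, cubePoint_sub_cubePoint_flip]
        split_ifs <;> simp [hneg, hv]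
      · rintro ⟨f, i⟩ - ⟨g, j⟩ - h
        simp only [edge, Prod.mk.injEq, EmbeddingLike.apply_eq_iff_eq] at h
        obtain ⟨rfl, h⟩ := h
        refine Prod.ext rfl (by_contra fun hij => ?_)
        have hi := congrFun h i
        rw [Function.update_self, Function.update_of_ne hij] at hi
        exact Bool.not_ne_self _ hi

end CubePoint

theorem thm_hypercube_unit_distances_general (N : EuclideanSpace ℝ (Fin 2) → ℝ)
    (hN : IsNorm N) (k : ℕ) :
    ∃ p : Fin (2 ^ k) → EuclideanSpace ℝ (Fin 2), Function.Injective p ∧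
      k * 2 ^ (k - 1) ≤
        Set.ncard {q : Fin (2 ^ k) × Fin (2 ^ k) |
          q.1 < q.2 ∧ N (p q.1 - p q.2) = 1} := by
  obtain ⟨v, hv, hinj⟩ := exists_injective_cubePoint _ (hN.infinite_setOf_eq_one le_rfl) k
  let e : Fin (2 ^ k) ≃ (Fin k → Bool) := (Fintype.equivFinOfCardEq (by simp)).symm
  refine ⟨cubePoint v ∘ e, hinj.comp e.injective, ?_⟩
  have hordered := mul_two_pow_le_ncard_unit_pairs_cubePoint e N hN.map_neg v hv
  rw [ncard_ne_eq_two_mul_ncard_lt (r := fun a b => N (cubePoint v (e a) - cubePoint v (e b)) = 1)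
    fun a b h => by rwa [← neg_sub, hN.map_neg]] at hordered
  have hpow : k * 2 ^ (k - 1) * 2 ≤ k * 2 ^ k := by cases k <;> simp [pow_succ, mul_assoc]
  exact Nat.le_of_mul_le_mul_right (hpow.trans hordered |>.trans_eq (mul_comm _ _)) two_pos

/-- For every norm `N` on `ℝ²` and every `k ≥ 1`, there are `2^k` points in `ℝ²`
determining at least `k·2^(k-1)` unit distances according to `N` (a hypercube
embedding). -/
theorem thm_hypercube_unit_distances (N : EuclideanSpace ℝ (Fin 2) → ℝ)
    (hN : IsNorm N) (k : ℕ) (hk : 1 ≤ k) :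
    ∃ p : Fin (2 ^ k) → EuclideanSpace ℝ (Fin 2), Function.Injective p ∧
      k * 2 ^ (k - 1) ≤
        Set.ncard {q : Fin (2 ^ k) × Fin (2 ^ k) |
          q.1 < q.2 ∧ N (p q.1 - p q.2) = 1} :=
  thm_hypercube_unit_distances_general N hN k
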